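/- Let e ≤ d be positive integers. Let p ∈ ℂ[x] be a polynomial whose restriction to U_e is an injective map into U_d, let B = {p(λ) : λ^e = 1} ⊆ U_d, and let ρ ∈ ℂ[x] be a polynomial with ρ(μ) = 1 for μ ∈ B and ρ(μ) = 0 for μ ∈ U_d ∖ B. Let H be a complex Hilbert space and let A_1, …, A_k be pairwise commuting bounded normal linear operators on H with A_i^e = I for all i. Then the operators C_i = p(A_i), i ∈ [k], are pairwise commuting bounded normal operators on H satisfying C_i^d = I and ρ(C_i) = I for all i. -/

import Mathlib

/-!
If `A ^ e = 1` then `X ^ e - 1` annihilates `A`; it is separable, so every polynomial vanishing on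
the `e`-th roots of unity is a multiple of it and also annihilates `A`. Applied to `p ^ d - 1` and
`ρ ∘ p - 1` this gives `C ^ d = 1` and `ρ(C) = 1`. Commutation and normality of `C = p(A)` hold
because `p(A)` lies in the (star) algebra generated by `A`.
-/

open Polynomial

theorem Commute.aeval_aeval {R A : Type*} [CommSemiring R] [Semiring A] [Algebra R A]
    {a b : A} (h : Commute a b) (p q : R[X]) : Commute (aeval a p) (aeval b q) :=
  Algebra.commute_of_mem_adjoin_singleton_of_commute (aeval_mem_adjoin_singleton R b)
    (Algebra.commute_of_mem_adjoin_singleton_of_commute (aeval_mem_adjoin_singleton R a)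
      h.symm).symm

theorem IsStarNormal.aeval {R A : Type*} [CommSemiring R] [StarRing R] [Semiring A] [StarRing A]
    [Algebra R A] [StarModule R A] {a : A} [IsStarNormal a] (p : R[X]) :
    IsStarNormal (Polynomial.aeval a p) := by
  have hmem : Polynomial.aeval a p ∈ StarAlgebra.adjoin R {a} :=
    Algebra.adjoin_le (S := (StarAlgebra.adjoin R {a}).toSubalgebra)
      (Set.singleton_subset_iff.mpr (StarAlgebra.self_mem_adjoin_singleton R a))
      (aeval_mem_adjoin_singleton R a)
  exact ⟨setLike_mul_comm (star_mem hmem) hmem⟩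

theorem X_pow_sub_one_dvd_of_eval_eq_zero {K : Type*} [Field K] [IsAlgClosed K] {e : ℕ}
    (he : (e : K) ≠ 0) {f : K[X]} (hf : ∀ x : K, x ^ e = 1 → f.eval x = 0) :
    (X ^ e - 1 : K[X]) ∣ f := by
  rcases eq_or_ne f 0 with rfl | hf0
  · exact dvd_zero _
  have he0 : e ≠ 0 := by rintro rfl; exact he Nat.cast_zero
  have hmonic : (X ^ e - 1 : K[X]).Monic := by
    simpa using monic_X_pow_sub_C (1 : K) he0
  refine (IsAlgClosed.splits _).dvd_of_roots_le_roots hmonic.ne_zero ?_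
  rw [Multiset.le_iff_subset (nodup_roots (X_pow_sub_one_separable_iff.mpr he))]
  intro x hx
  rw [mem_roots hmonic.ne_zero, IsRoot, eval_sub, eval_pow, eval_X, eval_one, sub_eq_zero] at hx
  exact (mem_roots hf0).mpr (hf x hx)

theorem aeval_eq_of_eval_eq_on_rootsOfUnity {K A : Type*} [Field K] [IsAlgClosed K] [Ring A]
    [Algebra K A] {e : ℕ} (he : (e : K) ≠ 0) {a : A} (ha : a ^ e = 1) {f g : K[X]}
    (hfg : ∀ x : K, x ^ e = 1 → f.eval x = g.eval x) : aeval a f = aeval a g := by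
  obtain ⟨q, hq⟩ := X_pow_sub_one_dvd_of_eval_eq_zero he (f := f - g) fun x hx => by
    rw [eval_sub, hfg x hx, sub_self]
  rw [← sub_eq_zero, ← map_sub, hq, map_mul, map_sub, map_pow, aeval_X, ha, map_one, sub_self,
    zero_mul]

theorem stmt9_general (e d : ℕ) (he : 1 ≤ e)
    (p : Polynomial ℂ)
    (hmap : ∀ l : ℂ, l ^ e = 1 → (p.eval l) ^ d = 1)
    (ρ : Polynomial ℂ)
    (hρ1 : ∀ μ : ℂ, (∃ l : ℂ, l ^ e = 1 ∧ p.eval l = μ) → ρ.eval μ = 1)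
    {H : Type*} [NormedAddCommGroup H] [InnerProductSpace ℂ H] [CompleteSpace H]
    (k : ℕ) (A : Fin k → (H →L[ℂ] H))
    (hcomm : ∀ i j, A i * A j = A j * A i)
    (hnormal : ∀ i, A i * star (A i) = star (A i) * A i)
    (horder : ∀ i, A i ^ e = 1) :
    (∀ i j, Polynomial.aeval (A i) p * Polynomial.aeval (A j) p =
        Polynomial.aeval (A j) p * Polynomial.aeval (A i) p) ∧
    (∀ i, Polynomial.aeval (A i) p * star (Polynomial.aeval (A i) p) =
        star (Polynomial.aeval (A i) p) * Polynomial.aeval (A i) p) ∧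
    (∀ i, Polynomial.aeval (A i) p ^ d = 1) ∧
    (∀ i, Polynomial.aeval (Polynomial.aeval (A i) p) ρ = 1) := by
  have he' : (e : ℂ) ≠ 0 := Nat.cast_ne_zero.mpr (by omega)
  refine ⟨fun i j => (Commute.aeval_aeval (hcomm i j) p p).eq, fun i => ?_, fun i => ?_, fun i => ?_⟩
  · have : IsStarNormal (A i) := ⟨(hnormal i).symm⟩
    exact (IsStarNormal.aeval (a := A i) p).star_comm_self.symm.eq
  · simpa using aeval_eq_of_eval_eq_on_rootsOfUnity he' (horder i) (f := p ^ d) (g := 1)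
      fun l hl => by simp [hmap l hl]
  · simpa [aeval_comp] using
      aeval_eq_of_eval_eq_on_rootsOfUnity he' (horder i) (f := ρ.comp p) (g := 1)
        fun l hl => by simp [hρ1 _ ⟨l, hl, rfl⟩]

theorem stmt9 (e d : ℕ) (he : 1 ≤ e) (hed : e ≤ d)
    (p : Polynomial ℂ)
    (hmap : ∀ l : ℂ, l ^ e = 1 → (p.eval l) ^ d = 1)
    (hinj : ∀ l l' : ℂ, l ^ e = 1 → l' ^ e = 1 → p.eval l = p.eval l' → l = l')
    (ρ : Polynomial ℂ)
    (hρ1 : ∀ μ : ℂ, (∃ l : ℂ, l ^ e = 1 ∧ p.eval l = μ) → ρ.eval μ = 1)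
    (hρ0 : ∀ μ : ℂ, μ ^ d = 1 → ¬ (∃ l : ℂ, l ^ e = 1 ∧ p.eval l = μ) → ρ.eval μ = 0)
    {H : Type*} [NormedAddCommGroup H] [InnerProductSpace ℂ H] [CompleteSpace H]
    (k : ℕ) (A : Fin k → (H →L[ℂ] H))
    (hcomm : ∀ i j, A i * A j = A j * A i)
    (hnormal : ∀ i, A i * star (A i) = star (A i) * A i)
    (horder : ∀ i, A i ^ e = 1) :
    (∀ i j, Polynomial.aeval (A i) p * Polynomial.aeval (A j) p =
        Polynomial.aeval (A j) p * Polynomial.aeval (A i) p) ∧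
    (∀ i, Polynomial.aeval (A i) p * star (Polynomial.aeval (A i) p) =
        star (Polynomial.aeval (A i) p) * Polynomial.aeval (A i) p) ∧
    (∀ i, Polynomial.aeval (A i) p ^ d = 1) ∧
    (∀ i, Polynomial.aeval (Polynomial.aeval (A i) p) ρ = 1) :=
  stmt9_general e d he p hmap ρ hρ1 k A hcomm hnormal horder
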